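/- arXiv:2409.12154 — 7 statements merged into one kernel-verified Lean document; each statement's English description precedes it below -/
import Mathlib

section
/- Let x be an instance satisfying the constraints C, and let E be an AXp of the decision κ(x), i.e. a subset-minimal partial assignment E with E(x) such that every instance y extending E satisfies κ(y) = κ(x). Then there exists a partial assignment E' ⊆ E that is an AXpc of κ(x), i.e. a subset-minimal partial assignment with E'(x), C(E'), and such that every instance y with C(y) extending E' satisfies κ(y) = κ(x). -/
variable {F V Cl : Type*}

/-- A partial assignment: a set of literals `(f, v)` with `v` in the domain of `f`,
assigning at most one value to each feature. -/
def IsPA (d : F → Set V) (E : Set (F × V)) : Prop :=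
  (∀ f v, (f, v) ∈ E → v ∈ d f) ∧ ∀ f v v', (f, v) ∈ E → (f, v') ∈ E → v = v'

/-- An instance: a partial assignment assigning a value to every feature. -/
def IsInst (d : F → Set V) (x : Set (F × V)) : Prop :=
  IsPA d x ∧ ∀ f, ∃ v, (f, v) ∈ x

/-- The feature space 𝔽: the set of all instances. -/
def FS (d : F → Set V) : Set (Set (F × V)) := {x | IsInst d x}

/-- 𝔽[C]: the set of instances satisfying the constraints `C`. -/
def FSC (d : F → Set V) (C : Set (F × V) → Prop) : Set (Set (F × V)) :=
  {x | IsInst d x ∧ C x}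

/-- The coverage of `E` in `X`: the set of elements of `X` extending `E`. -/
def cov (X : Set (Set (F × V))) (E : Set (F × V)) : Set (Set (F × V)) :=
  {x ∈ X | E ⊆ x}

/-- `E'` subsumes `E` in `X`. -/
def Subsumes (X : Set (Set (F × V))) (E' E : Set (F × V)) : Prop :=
  ∀ x ∈ X, E ⊆ x → E' ⊆ x

/-- `E'` strictly subsumes `E` in `X`. -/
def StrictSubsumes (X : Set (Set (F × V))) (E' E : Set (F × V)) : Prop :=
  Subsumes X E' E ∧ ¬ Subsumes X E E'

/-- Weak abductive explanation (wAXp) of the decision `κ x`. -/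
def wAXp (d : F → Set V) (κ : Set (F × V) → Cl) (x E : Set (F × V)) : Prop :=
  IsPA d E ∧ E ⊆ x ∧ ∀ y ∈ FS d, E ⊆ y → κ y = κ x

/-- Abductive explanation (AXp): a subset-minimal weak AXp. -/
def AXp (d : F → Set V) (κ : Set (F × V) → Cl) (x E : Set (F × V)) : Prop :=
  wAXp d κ x E ∧ ∀ E', E' ⊂ E → ¬ wAXp d κ x E'

/-- Weak AXpc of the decision `κ x` under constraints `C`. -/
def wAXpc (d : F → Set V) (C : Set (F × V) → Prop) (κ : Set (F × V) → Cl)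
    (x E : Set (F × V)) : Prop :=
  IsPA d E ∧ E ⊆ x ∧ C E ∧ ∀ y ∈ FSC d C, E ⊆ y → κ y = κ x

/-- AXpc: a subset-minimal weak AXpc. -/
def AXpc (d : F → Set V) (C : Set (F × V) → Prop) (κ : Set (F × V) → Cl)
    (x E : Set (F × V)) : Prop :=
  wAXpc d C κ x E ∧ ∀ E', E' ⊂ E → ¬ wAXpc d C κ x E'

/-- Conditions (i) and (ii) of a coverage-based PI-explanation relative to a set `X`
of instances. -/
def CPIcond (d : F → Set V) (κ : Set (F × V) → Cl) (X : Set (Set (F × V)))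
    (x E : Set (F × V)) : Prop :=
  IsPA d E ∧ E ⊆ x ∧ ∀ y ∈ X, E ⊆ y → κ y = κ x

/-- Coverage-based PI-explanation (CPI-Xp) of `κ x` relative to the set `X` of instances:
conditions (i), (ii), and (iii) no partial assignment satisfying (i) and (ii)
strictly subsumes `E` in `X`. -/
def CPI (d : F → Set V) (κ : Set (F × V) → Cl) (X : Set (Set (F × V)))
    (x E : Set (F × V)) : Prop :=
  CPIcond d κ X x E ∧ ¬ ∃ E', CPIcond d κ X x E' ∧ StrictSubsumes X E' E

/-- Minimal coverage-based PI-explanation (mCPI-Xp): a subset-minimal CPI-Xp. -/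
def mCPI (d : F → Set V) (κ : Set (F × V) → Cl) (X : Set (Set (F × V)))
    (x E : Set (F × V)) : Prop :=
  CPI d κ X x E ∧ ∀ E', E' ⊂ E → ¬ CPI d κ X x E'

/-- Weak dataset-based AXp of `κ v` with respect to the dataset `T`. -/
def dwAXp (d : F → Set V) (κ : Set (F × V) → Cl) (T : Set (Set (F × V)))
    (v E : Set (F × V)) : Prop :=
  IsPA d E ∧ E ⊆ v ∧ ∀ y ∈ T, E ⊆ y → κ y = κ v

/-- Weak dataset-based AXpc of `κ x` with respect to the dataset `T`
under constraints `C`. -/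
def dwAXpc (d : F → Set V) (C : Set (F × V) → Prop) (κ : Set (F × V) → Cl)
    (T : Set (Set (F × V))) (x E : Set (F × V)) : Prop :=
  IsPA d E ∧ E ⊆ x ∧ C E ∧ ∀ y ∈ T, C y → E ⊆ y → κ y = κ x

/-- The dependency constraint `E → E'` is in `C*`. -/
def DCin (d : F → Set V) (C : Set (F × V) → Prop) (E E' : Set (F × V)) : Prop :=
  IsPA d E ∧ IsPA d E' ∧ E.Nonempty ∧ E'.Nonempty ∧ E ≠ E' ∧
    ∀ x ∈ FSC d C, E ⊆ x → E' ⊆ x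

/-- `L_{v,E,T}`: the set of literals of `v` contained in every instance of `cov T E`. -/
def Lset (T : Set (Set (F × V))) (v E : Set (F × V)) : Set (F × V) :=
  {ℓ ∈ v | ∀ z ∈ cov T E, ℓ ∈ z}

/-- `S_{E,y} = y ∩ L_{v,E,T}`. -/
def Sset (T : Set (Set (F × V))) (v E y : Set (F × V)) : Set (F × V) :=
  y ∩ Lset T v E

/-- every AXp of `κ x` (for `x ∈ 𝔽[C]`) contains an AXpc of `κ x`. -/
theorem axp_contains_axpc [Finite F] [Finite V]
    (d : F → Set V) (hd : ∀ f, (d f).Nontrivial)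
    (C : Set (F × V) → Prop) (κ : Set (F × V) → Cl)
    (hC2 : ∀ E E' : Set (F × V), E ⊆ E' → C E' → C E)
    (hC1 : (FSC d C).Nonempty)
    (x : Set (F × V)) (hx : x ∈ FSC d C)
    (E : Set (F × V)) (hE : AXp d κ x E) :
    ∃ E', E' ⊆ E ∧ AXpc d C κ x E' := by
  obtain ⟨⟨hPA, hEx, hForall⟩, -⟩ := hE
  obtain ⟨hxInst, hxC⟩ := hx
  -- E itself is a weak AXpc
  have hw : wAXpc d C κ x E :=
    ⟨hPA, hEx, hC2 E x hEx hxC, fun y hy hEy => hForall y hy.1 hEy⟩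
  -- the set of weak AXpc's contained in E
  set S : Set (Set (F × V)) := {E' | E' ⊆ E ∧ wAXpc d C κ x E'} with hS
  have hES : E ∈ S := ⟨subset_rfl, hw⟩
  have : WellFoundedLT (Set (F × V)) := Finite.to_wellFoundedLT
  obtain ⟨m, hmS, hmin⟩ := this.wf.has_min S ⟨E, hES⟩
  refine ⟨m, hmS.1, hmS.2, fun E' hE' hE'w => ?_⟩
  exact hmin E' ⟨hE'.subset.trans hmS.1, hE'w⟩ hE'
end

section
/- Let x ∈ 𝔽[C]. Every mCPI-Xp of the decision κ(x) (i.e. every subset-minimal CPI-Xp of κ(x)) is an AXpc of κ(x) (i.e. a subset-minimal weak AXpc of κ(x)). -/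
variable {F V Cl : Type*}

/-- every mCPI-Xp of `κ x` is an AXpc of `κ x`. -/
theorem mcpi_is_axpc
    (d : F → Set V) (C : Set (F × V) → Prop) (κ : Set (F × V) → Cl)
    (hC2 : ∀ E E' : Set (F × V), E ⊆ E' → C E' → C E)
    (hC1 : (FSC d C).Nonempty)
    (x : Set (F × V)) (hx : x ∈ FSC d C)
    (E : Set (F × V)) (hE : mCPI d κ (FSC d C) x E) :
    AXpc d C κ x E := by
  obtain ⟨⟨⟨hPA, hEx, hκ⟩, hiii⟩, hmin⟩ := hE
  refine ⟨⟨hPA, hEx, hC2 E x hEx hx.2, fun y hy hEy => hκ y hy hEy⟩, ?_⟩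
  intro E' hsub hw
  have hcond' : CPIcond d κ (FSC d C) x E' :=
    ⟨hw.1, hw.2.1, fun y hy h => hw.2.2.2 y hy h⟩
  have hsubs : Subsumes (FSC d C) E' E :=
    fun y _ h => (hsub.1.trans h)
  by_cases hS : Subsumes (FSC d C) E E'
  · refine hmin E' hsub ⟨hcond', ?_⟩
    rintro ⟨E'', hc'', hss'', hns''⟩
    exact hiii ⟨E'', hc'', fun y hy h => hss'' y hy (hsubs y hy h),
      fun hEE'' => hns'' (fun y hy h => hsub.1.trans (hEE'' y hy h))⟩
  · exact hiii ⟨E', hcond', hsubs, hS⟩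
end

section
/- Suppose the set of constraints is empty, i.e. C(E) holds for every partial assignment E (so 𝔽[C] = 𝔽). Then for every instance x, a partial assignment E is an AXp of κ(x) if and only if E is an mCPI-Xp of κ(x). -/
variable {F V Cl : Type*}

/-- Every partial assignment extends to an instance. -/
lemma pa_extends {d : F → Set V} (hd : ∀ f, (d f).Nonempty) {E : Set (F × V)}
    (hE : IsPA d E) : ∃ y ∈ FS d, E ⊆ y := by
  classical
  set g : F → V := fun f => if h : ∃ w, (f, w) ∈ E then h.choose else (hd f).choose with hg
  refine ⟨{p | p.2 = g p.1}, ⟨⟨?_, ?_⟩, fun f => ⟨g f, rfl⟩⟩, ?_⟩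
  · rintro f v (hv : v = g f)
    subst hv
    by_cases h : ∃ w, (f, w) ∈ E
    · simp only [hg, dif_pos h]; exact hE.1 _ _ h.choose_spec
    · simp only [hg, dif_neg h]; exact (hd f).choose_spec
  · rintro f v v' (h1 : v = g f) (h2 : v' = g f); rw [h1, h2]
  · rintro ⟨f, v⟩ hv
    have h : ∃ w, (f, w) ∈ E := ⟨v, hv⟩
    have : g f = h.choose := by simp [hg, dif_pos h]
    show v = g f
    rw [this]
    exact hE.2 f v h.choose hv h.choose_spec

/-- In the unconstrained feature space, subsumption is reverse inclusion. -/
lemma subsumes_subset {d : F → Set V} (hd : ∀ f, (d f).Nontrivial)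
    {E E' : Set (F × V)} (hE : IsPA d E)
    (hs : Subsumes (FS d) E' E) : E' ⊆ E := by
  classical
  rintro ⟨f, v⟩ hv
  by_contra hne
  -- find w ∈ d f, w ≠ v, with E ∪ {(f,w)} a PA
  obtain ⟨w, hwd, hwv, hPA⟩ : ∃ w, w ∈ d f ∧ w ≠ v ∧ IsPA d (insert (f, w) E) := by
    by_cases h : ∃ u, (f, u) ∈ E
    · obtain ⟨u, hu⟩ := h
      have huv : u ≠ v := fun h => hne (h ▸ hu)
      refine ⟨u, hE.1 _ _ hu, huv, ?_⟩
      have : insert (f, u) E = E := Set.insert_eq_self.2 hu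
      rw [this]; exact hE
    · obtain ⟨a, ha, b, hb, hab⟩ := hd f
      refine ⟨if a = v then b else a, ?_, ?_, ?_, ?_⟩
      · split <;> assumption
      · split
        · rename_i h'; exact fun hbv => hab (h'.trans hbv.symm)
        · assumption
      · rintro f' v' (h' | h')
        · rw [Prod.mk.injEq] at h'
          rw [h'.1, h'.2]; split <;> assumption
        · exact hE.1 _ _ h'
      · rintro f' v1 v2 (h1 | h1) (h2 | h2)
        · rw [Prod.mk.injEq] at h1 h2; rw [h1.2, h2.2]
        · rw [Prod.mk.injEq] at h1; exact absurd ⟨v2, h1.1 ▸ h2⟩ h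
        · rw [Prod.mk.injEq] at h2; exact absurd ⟨v1, h2.1 ▸ h1⟩ h
        · exact hE.2 _ _ _ h1 h2
  obtain ⟨y, hy, hsub⟩ := pa_extends (fun f => (hd f).nonempty) hPA
  have hEy : E ⊆ y := fun p hp => hsub (Set.mem_insert_of_mem _ hp)
  have hvy : (f, v) ∈ y := hs y hy hEy hv
  have hwy : (f, w) ∈ y := hsub (Set.mem_insert _ _)
  exact hwv (hy.1.2 f w v hwy hvy)

/-- when the constraints are trivially satisfied (so `𝔽[C] = 𝔽`),
the AXp's of `κ x` are exactly the mCPI-Xp's of `κ x`. -/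
theorem axp_iff_mcpi_of_no_constraints
    (d : F → Set V) (hd : ∀ f, (d f).Nontrivial)
    (C : Set (F × V) → Prop) (κ : Set (F × V) → Cl)
    (hC : ∀ E : Set (F × V), C E)
    (x : Set (F × V)) (hx : x ∈ FSC d C)
    (E : Set (F × V)) :
    AXp d κ x E ↔ mCPI d κ (FSC d C) x E := by
  have hX : FSC d C = FS d := Set.ext fun y => ⟨fun h => h.1, fun h => ⟨h, hC y⟩⟩
  rw [hX]
  have hcw : ∀ E', CPIcond d κ (FS d) x E' ↔ wAXp d κ x E' := fun E' => Iff.rfl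
  constructor
  · rintro ⟨hw, hmin⟩
    refine ⟨⟨(hcw E).2 hw, ?_⟩, fun E' hE' hCPI => hmin E' hE' ((hcw E').1 hCPI.1)⟩
    rintro ⟨E', hc, hsub, hnsub⟩
    have h1 : E' ⊆ E := subsumes_subset hd hw.1 hsub
    have h2 : E' ≠ E := by rintro rfl; exact hnsub hsub
    exact hmin E' (ssubset_of_subset_of_ne h1 h2) ((hcw E').1 hc)
  · rintro ⟨⟨hc, hns⟩, _⟩
    refine ⟨(hcw E).1 hc, fun E' hE' hw' => ?_⟩
    refine hns ⟨E', (hcw E').2 hw', ?_, ?_⟩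
    · exact fun y _ hEy => (hE'.1.trans hEy : E' ⊆ y)
    · intro hs
      have : E ⊆ E' := subsumes_subset hd hw'.1 hs
      exact hE'.2 this
end

section
/- Let T ⊆ 𝔽[C] be a dataset and x ∈ 𝔽[C]. Every d-mCPI-Xp of the decision κ(x) with respect to T (i.e. every subset-minimal d-CPI-Xp) is a d-AXpc of κ(x) with respect to T (i.e. a subset-minimal weak d-AXpc). -/
variable {F V Cl : Type*}

/-- every d-mCPI-Xp of `κ x` w.r.t. a dataset `T ⊆ 𝔽[C]` is a
d-AXpc of `κ x` w.r.t. `T` (a subset-minimal weak d-AXpc). -/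
theorem dmcpi_is_daxpc
    (d : F → Set V) (C : Set (F × V) → Prop) (κ : Set (F × V) → Cl)
    (hC2 : ∀ E E' : Set (F × V), E ⊆ E' → C E' → C E)
    (hC1 : (FSC d C).Nonempty)
    (T : Set (Set (F × V))) (hT : T ⊆ FSC d C)
    (x : Set (F × V)) (hx : x ∈ FSC d C)
    (E : Set (F × V)) (hE : mCPI d κ T x E) :
    dwAXpc d C κ T x E ∧ ∀ E', E' ⊂ E → ¬ dwAXpc d C κ T x E' := by
  obtain ⟨⟨⟨hPA, hEx, hκ⟩, hnostrict⟩, hmin⟩ := hE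
  constructor
  · exact ⟨hPA, hEx, hC2 E x hEx hx.2, fun y hy _ hEy => hκ y hy hEy⟩
  · intro E' hE'E ⟨hPA', hE'x, _, hκ'⟩
    have hcond' : CPIcond d κ T x E' :=
      ⟨hPA', hE'x, fun y hy hEy => hκ' y hy (hT hy).2 hEy⟩
    have hsub : Subsumes T E' E := fun y _ hEy => (hE'E.1.trans hEy)
    by_cases hrev : Subsumes T E E'
    · refine hmin E' hE'E ⟨hcond', ?_⟩
      rintro ⟨E'', hcond'', hsub'', hnrev''⟩
      exact hnostrict ⟨E'', hcond'', fun y hy hEy => hsub'' y hy (hsub y hy hEy),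
        fun h => hnrev'' (fun y hy hE''y => hsub y hy (h y hy hE''y))⟩
    · exact hnostrict ⟨E', hcond', hsub, hrev⟩
end

section
/- Let v be an instance with κ(v) = c, T a dataset, E, E' two weak d-AXp's of κ(v) w.r.t. T such that cov_T(E) ⊊ cov_T(E'), and let y ∈ cov_T(E') \ cov_T(E). Then S_{E,y} = y ∩ L_{v,E,T} is itself a weak d-AXp of κ(v) w.r.t. T. -/
variable {F V Cl : Type*}

/-- Lemma 1(c): under the same hypotheses, `S_{E,y}` is itself a
weak d-AXp of `κ v` w.r.t. `T`. -/
theorem Sset_dwAXp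
    (d : F → Set V) (κ : Set (F × V) → Cl)
    (T : Set (Set (F × V))) (hTF : T ⊆ FS d) (hTfin : T.Finite)
    (v : Set (F × V)) (hv : IsInst d v) (c : Cl) (hc : κ v = c)
    (E E' : Set (F × V)) (hE : dwAXp d κ T v E) (hE' : dwAXp d κ T v E')
    (hcov : cov T E ⊂ cov T E')
    (y : Set (F × V)) (hy : y ∈ cov T E' \ cov T E) :
    dwAXp d κ T v (Sset T v E y) := by
  obtain ⟨hy', hyn⟩ := hy
  have hSv : Sset T v E y ⊆ v := fun ℓ hℓ => hℓ.2.1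
  refine ⟨⟨fun f w h => hv.1.1 f w (hSv h),
          fun f w w' h h' => hv.1.2 f w w' (hSv h) (hSv h')⟩, hSv, ?_⟩
  intro z hz hSz
  apply hE'.2.2 z hz
  intro ℓ hℓ
  apply hSz
  exact ⟨hy'.2 hℓ, hE'.2.1 hℓ, fun w hw => (hcov.1 hw).2 hℓ⟩
end

section
/- Let v be an instance with κ(v) = c, T a dataset, E, E' two weak d-AXp's of κ(v) w.r.t. T such that cov_T(E) ⊊ cov_T(E'), and let y ∈ cov_T(E') \ cov_T(E). Then cov_T(E) ⊊ cov_T(S_{E,y}), where S_{E,y} = y ∩ L_{v,E,T}; more precisely cov_T(E) ⊆ cov_T(S_{E,y}) and y ∈ cov_T(S_{E,y}) \ cov_T(E). -/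
variable {F V Cl : Type*}

/-- Lemma 1(d,e): under the same hypotheses,
`cov_T(E) ⊊ cov_T(S_{E,y})`; more precisely `cov_T(E) ⊆ cov_T(S_{E,y})` and
`y ∈ cov_T(S_{E,y}) \ cov_T(E)`. -/
theorem cov_ssubset_cov_Sset
    (d : F → Set V) (κ : Set (F × V) → Cl)
    (T : Set (Set (F × V))) (hTF : T ⊆ FS d) (hTfin : T.Finite)
    (v : Set (F × V)) (hv : IsInst d v) (c : Cl) (hc : κ v = c)
    (E E' : Set (F × V)) (hE : dwAXp d κ T v E) (hE' : dwAXp d κ T v E')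
    (hcov : cov T E ⊂ cov T E')
    (y : Set (F × V)) (hy : y ∈ cov T E' \ cov T E) :
    cov T E ⊂ cov T (Sset T v E y) ∧
      cov T E ⊆ cov T (Sset T v E y) ∧
      y ∈ cov T (Sset T v E y) \ cov T E := by
  have hsub : cov T E ⊆ cov T (Sset T v E y) := by
    rintro z ⟨hzT, hEz⟩
    refine ⟨hzT, ?_⟩
    rintro ℓ ⟨_, hℓv, hℓ⟩
    exact hℓ z ⟨hzT, hEz⟩
  have hyS : y ∈ cov T (Sset T v E y) := ⟨hy.1.1, Set.inter_subset_left⟩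
  exact ⟨⟨hsub, fun h => hy.2 (h hyS)⟩, hsub, hyS, hy.2⟩
end

section
/- (Independence of CPI-Xp's.) Let x ∈ 𝔽[C] and let E, E' both be CPI-Xp's of the decision κ(x). If the dependency constraint E → E' is in C*, then the dependency constraint E' → E is also in C*. Equivalently, there do not exist two CPI-Xp's E, E' of κ(x) with E → E' ∈ C* and E' → E ∉ C*. -/
variable {F V Cl : Type*}

/-- Independence of CPI-Xp's: if `E, E'` are CPI-Xp's of `κ x` and the
dependency constraint `E → E'` is in `C*`, then `E' → E` is also in `C*`. -/
theorem cpi_independence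
    (d : F → Set V) (hd : ∀ f, (d f).Nontrivial)
    (C : Set (F × V) → Prop) (κ : Set (F × V) → Cl)
    (hC2 : ∀ E E' : Set (F × V), E ⊆ E' → C E' → C E)
    (hC1 : (FSC d C).Nonempty)
    (x : Set (F × V)) (hx : x ∈ FSC d C)
    (E E' : Set (F × V))
    (hE : CPI d κ (FSC d C) x E) (hE' : CPI d κ (FSC d C) x E')
    (hDC : DCin d C E E') :
    DCin d C E' E := by
  obtain ⟨hPA, hPA', hne, hne', hneq, hsub⟩ := hDC
  refine ⟨hPA', hPA, hne', hne, hneq.symm, fun y hy hsy => ?_⟩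
  by_contra hcontra
  exact hE.2 ⟨E', hE'.1, hsub, fun hS => hcontra (hS y hy hsy)⟩
end
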